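/- Let (A,‖·‖) be a commutative unital complex normed algebra whose norm ‖·‖ is a uniform norm, such that (A,‖·‖) is a Q-algebra and (A,‖·‖) is regular. If |·| is any uniform norm on A, then the set of |·|-continuous nonzero multiplicative linear functionals on A equals the set of ‖·‖-continuous nonzero multiplicative linear functionals on A, i.e. M(A,|·|) = M(A,‖·‖). -/

import Mathlib

/-- `x` is quasi-invertible: there is `y` with `x ∘ y = y ∘ x = 0`
where `x ∘ y = x + y - x*y`. -/
def IsQuasiInv {A : Type*} [Ring A] (x : A) : Prop :=
  ∃ y, x + y - x * y = 0 ∧ y + x - y * x = 0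

/-- `S` is open in the topology induced by the norm `N`. -/
def NormOpen {A : Type*} [AddGroup A] (N : A → ℝ) (S : Set A) : Prop :=
  ∀ x ∈ S, ∃ ε > 0, ∀ y, N (y - x) < ε → y ∈ S

/-- A uniform norm: a submultiplicative norm satisfying the square property. -/
structure IsUniformNorm {A : Type*} [Ring A] [Module ℂ A] (N : A → ℝ) : Prop where
  eq_zero_iff : ∀ x, N x = 0 ↔ x = 0
  add_le : ∀ x y, N (x + y) ≤ N x + N y
  smul_eq : ∀ (c : ℂ) (x : A), N (c • x) = ‖c‖ * N x
  mul_le : ∀ x y, N (x * y) ≤ N x * N y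
  sq_eq : ∀ x, N (x * x) = N x * N x

/-- `M(A, N)`: the nonzero multiplicative linear functionals on `A` that are
continuous (i.e. bounded) with respect to the norm `N`. -/
def MSpec {A : Type*} [Ring A] [Module ℂ A] (N : A → ℝ) : Set (A → ℂ) :=
  {f | (∀ x y, f (x + y) = f x + f y) ∧ (∀ (c : ℂ) (x : A), f (c • x) = c * f x) ∧
       (∀ x y, f (x * y) = f x * f y) ∧ f ≠ 0 ∧ (∃ C : ℝ, ∀ x, ‖f x‖ ≤ C * N x)}

/-- `(A, N)` is regular: for every subset `F` of `M(A,N)` that is closed in the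
weak-* (pointwise convergence) topology and every `f₁ ∈ M(A,N) \ F` there is
`x ∈ A` vanishing on `F` with `f₁ x ≠ 0`. -/
def RegularWrt {A : Type*} [Ring A] [Module ℂ A] (N : A → ℝ) : Prop :=
  ∀ F : Set (A → ℂ), F ⊆ MSpec N →
    IsClosed {g : ↥(MSpec N) | (g : A → ℂ) ∈ F} →
    ∀ f₁ ∈ MSpec N, f₁ ∉ F → ∃ x : A, (∀ f ∈ F, f x = 0) ∧ f₁ x ≠ 0

/-!
Because `(A, N)` is a Q-algebra, a character can never send an element of the `ε`-ball of
quasi-invertibles to `1`, which bounds it by `N / ε`; hence `M(A,q) ⊆ M(A,N)`.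
A `q`-bounded character is `q`-contractive (apply the bound to `x ^ 2 ^ n`), so `M(A,q)` is
weak-* closed in `M(A,N)`. If some `f₁ ∈ M(A,N)` were not `q`-continuous, regularity would give
an `x` vanishing on `M(A,q)` with `f₁ x ≠ 0`. But by the square property and Gelfand's formula the
spectral radius of `x` in the completion of `(A, q)` is `q x ≠ 0`, so some character of that
Banach algebra, which restricts to an element of `M(A,q)`, does not vanish at `x`.
-/

open Filter WeakDual UniformSpace
open scoped NNReal ENNReal

namespace IsUniformNorm

variable {A : Type*} [Ring A] [Module ℂ A] {q : A → ℝ}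

theorem map_zero (hq : IsUniformNorm q) : q 0 = 0 :=
  (hq.eq_zero_iff 0).mpr rfl

theorem map_neg (hq : IsUniformNorm q) (x : A) : q (-x) = q x := by
  simpa using hq.smul_eq (-1) x

theorem nonneg (hq : IsUniformNorm q) (x : A) : 0 ≤ q x := by
  have h := hq.add_le x (-x)
  rw [add_neg_cancel, hq.map_zero, hq.map_neg] at h
  linarith

theorem map_pow_two_pow (hq : IsUniformNorm q) (x : A) (n : ℕ) :
    q (x ^ 2 ^ n) = q x ^ 2 ^ n := by
  induction n with
  | zero => simp
  | succ n ih => rw [pow_succ, pow_mul, sq, hq.sq_eq, ih, ← sq, ← pow_mul]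

def toAddGroupNorm (hq : IsUniformNorm q) : AddGroupNorm A where
  toFun := q
  map_zero' := hq.map_zero
  add_le' := hq.add_le
  neg' := hq.map_neg
  eq_zero_of_map_eq_zero' x := (hq.eq_zero_iff x).mp

end IsUniformNorm

theorem map_pow_two_pow_of_map_mul {A : Type*} [Monoid A] {f : A → ℂ}
    (hmul : ∀ x y, f (x * y) = f x * f y) (x : A) (n : ℕ) : f (x ^ 2 ^ n) = f x ^ 2 ^ n := by
  induction n with
  | zero => simp
  | succ n ih => rw [pow_succ, pow_mul, sq, hmul, ih, ← sq, ← pow_mul]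

theorem le_of_forall_pow_two_pow_le_mul {a b C : ℝ} (hb : 0 ≤ b)
    (h : ∀ n : ℕ, a ^ 2 ^ n ≤ C * b ^ 2 ^ n) : a ≤ b := by
  by_contra! hba
  obtain rfl | hb := hb.eq_or_lt
  · simpa [hba.not_ge] using h 0
  have hr : 1 < a / b := (one_lt_div hb).mpr hba
  obtain ⟨n, hn⟩ := pow_unbounded_of_one_lt C hr
  have hC : (a / b) ^ 2 ^ n ≤ C := by
    rw [div_pow, div_le_iff₀ (by positivity)]
    exact h n
  have hmono : (a / b) ^ n ≤ (a / b) ^ 2 ^ n := pow_le_pow_right₀ hr.le Nat.lt_two_pow_self.le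
  linarith

theorem map_ne_one_of_isQuasiInv {A : Type*} [Ring A] {f : A → ℂ}
    (hadd : ∀ x y, f (x + y) = f x + f y) (hmul : ∀ x y, f (x * y) = f x * f y) {y : A}
    (hy : IsQuasiInv y) : f y ≠ 1 := by
  obtain ⟨z, hyz, -⟩ := hy
  have h := congrArg (AddMonoidHom.mk' f hadd) hyz
  simp only [map_sub, map_add, map_zero, AddMonoidHom.mk'_apply, hmul] at h
  intro hy1
  simp [hy1] at h

section MSpec

variable {A : Type*} [Ring A] [Module ℂ A]

theorem norm_le_of_mem_mSpec {q : A → ℝ} (hq : IsUniformNorm q) {f : A → ℂ} (hf : f ∈ MSpec q)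
    (x : A) : ‖f x‖ ≤ q x := by
  obtain ⟨-, -, hmul, -, C, hC⟩ := hf
  refine le_of_forall_pow_two_pow_le_mul (C := C) (hq.nonneg x) fun n => ?_
  have h := hC (x ^ 2 ^ n)
  rwa [hq.map_pow_two_pow, map_pow_two_pow_of_map_mul hmul, norm_pow] at h

theorem exists_norm_le_mul_of_normOpen_isQuasiInv {N : A → ℝ} (hN : IsUniformNorm N)
    (hQ : NormOpen N {x | IsQuasiInv x}) {f : A → ℂ} (hadd : ∀ x y, f (x + y) = f x + f y)
    (hsmul : ∀ (c : ℂ) (x : A), f (c • x) = c * f x) (hmul : ∀ x y, f (x * y) = f x * f y) :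
    ∃ C : ℝ, ∀ x, ‖f x‖ ≤ C * N x := by
  obtain ⟨ε, hε, hball⟩ := hQ 0 ⟨0, by simp, by simp⟩
  refine ⟨ε⁻¹, fun x => ?_⟩
  rcases eq_or_ne (f x) 0 with hfx | hfx
  · simpa [hfx] using mul_nonneg (inv_nonneg.2 hε.le) (hN.nonneg x)
  have hfy : f ((f x)⁻¹ • x) = 1 := by rw [hsmul, inv_mul_cancel₀ hfx]
  have hNy : ε ≤ N ((f x)⁻¹ • x) := by
    by_contra! h
    exact map_ne_one_of_isQuasiInv hadd hmul (hball _ (by rwa [sub_zero])) hfy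
  rw [hN.smul_eq, norm_inv, le_inv_mul_iff₀ (norm_pos_iff.2 hfx)] at hNy
  rw [inv_mul_eq_div, le_div_iff₀ hε]
  linarith

theorem mSpec_subset_of_normOpen_isQuasiInv {N : A → ℝ} (hN : IsUniformNorm N)
    (hQ : NormOpen N {x | IsQuasiInv x}) (q : A → ℝ) : MSpec q ⊆ MSpec N :=
  fun _ ⟨hadd, hsmul, hmul, hne, _⟩ =>
    ⟨hadd, hsmul, hmul, hne, exists_norm_le_mul_of_normOpen_isQuasiInv hN hQ hadd hsmul hmul⟩

theorem isClosed_setOf_mem_mSpec {q : A → ℝ} (hq : IsUniformNorm q) (N : A → ℝ) :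
    IsClosed {g : MSpec N | (g : A → ℂ) ∈ MSpec q} := by
  have h : {g : MSpec N | (g : A → ℂ) ∈ MSpec q} =
      ⋂ x, {g : MSpec N | ‖(g : A → ℂ) x‖ ≤ q x} := by
    ext g
    simp only [Set.mem_iInter, Set.mem_ofPred_eq]
    refine ⟨fun hg => norm_le_of_mem_mSpec hq hg, fun hle => ?_⟩
    obtain ⟨hadd, hsmul, hmul, hne, -⟩ := g.2
    exact ⟨hadd, hsmul, hmul, hne, 1, by simpa using hle⟩
  rw [h]
  exact isClosed_iInter fun x =>
    isClosed_le ((continuous_apply x).comp continuous_subtype_val).norm continuous_const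

end MSpec

section BanachAlgebra

theorem spectralRadius_eq_nnnorm_of_nnnorm_pow_two_pow {B : Type*} [NormedRing B]
    [NormedAlgebra ℂ B] [CompleteSpace B] {a : B} (h : ∀ k : ℕ, ‖a ^ 2 ^ k‖₊ = ‖a‖₊ ^ 2 ^ k) :
    spectralRadius ℂ a = ‖a‖₊ := by
  refine tendsto_nhds_unique ?_ (tendsto_const_nhds (x := (‖a‖₊ : ℝ≥0∞)) (f := atTop (α := ℕ)))
  convert (spectrum.pow_nnnorm_pow_one_div_tendsto_nhds_spectralRadius a).comp
    (tendsto_pow_atTop_atTop_of_one_lt one_lt_two) using 1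
  refine funext fun n => ?_
  rw [Function.comp_apply, h, ENNReal.coe_pow, ← ENNReal.rpow_natCast, ← ENNReal.rpow_mul]
  simp

theorem WeakDual.CharacterSpace.exists_nnnorm_apply_eq_spectralRadius {B : Type*}
    [NormedCommRing B] [NormedAlgebra ℂ B] [CompleteSpace B] [Nontrivial B] (a : B) :
    ∃ φ : characterSpace ℂ B, (‖φ a‖₊ : ℝ≥0∞) = spectralRadius ℂ a := by
  obtain ⟨z, hz, hzr⟩ := spectrum.exists_nnnorm_eq_spectralRadius a
  obtain ⟨φ, rfl⟩ := CharacterSpace.mem_spectrum_iff_exists.mp hz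
  exact ⟨φ, hzr⟩

variable {B : Type*} [NormedCommRing B] [NormedAlgebra ℂ B]

theorem WeakDual.CharacterSpace.exists_completion_norm_apply_eq [Nontrivial B] {x : B}
    (h : ∀ k : ℕ, ‖x ^ 2 ^ k‖ = ‖x‖ ^ 2 ^ k) :
    ∃ φ : characterSpace ℂ (Completion B), ‖φ x‖ = ‖x‖ := by
  have hpow (k : ℕ) : ‖(x : Completion B) ^ 2 ^ k‖₊ = ‖(x : Completion B)‖₊ ^ 2 ^ k := by
    have hcoe : ((x ^ 2 ^ k : B) : Completion B) = (x : Completion B) ^ 2 ^ k :=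
      map_pow Completion.coeRingHom x _
    rw [← hcoe, Completion.nnnorm_coe, Completion.nnnorm_coe]
    exact NNReal.eq (by simpa using h k)
  have : Nontrivial (Completion B) := (Completion.coe_injective B).nontrivial
  obtain ⟨φ, hφ⟩ := exists_nnnorm_apply_eq_spectralRadius (x : Completion B)
  rw [spectralRadius_eq_nnnorm_of_nnnorm_pow_two_pow hpow, Completion.nnnorm_coe,
    ENNReal.coe_inj] at hφ
  exact ⟨φ, congrArg NNReal.toReal hφ⟩

theorem WeakDual.CharacterSpace.comp_coe_mem_mSpec (φ : characterSpace ℂ (Completion B)) :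
    (fun y : B => φ y) ∈ MSpec (‖·‖) := by
  refine ⟨fun x y => ?_, fun c x => ?_, fun x y => ?_, fun h => ?_, ‖toCLM φ‖, fun x => ?_⟩
  · simp only [Completion.coe_add, map_add]
  · simp only [Completion.coe_smul, map_smul, smul_eq_mul]
  · simp only [Completion.coe_mul, map_mul]
  · simpa [Completion.coe_one] using congrFun h 1
  · simpa using (toCLM φ).le_opNorm x

end BanachAlgebra

theorem IsUniformNorm.exists_mem_mSpec_apply_ne_zero {A : Type*} [CommRing A] [Algebra ℂ A]
    {q : A → ℝ} (hq : IsUniformNorm q) {x : A} (hx : x ≠ 0) : ∃ g ∈ MSpec q, g x ≠ 0 := by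
  -- `(A, q)` as a normed algebra: its `‖y‖` unfolds to `q y`, so `MSpec (‖·‖)` is `MSpec q`.
  let _ : NormedCommRing A := { hq.toAddGroupNorm.toNormedAddCommGroup, ‹CommRing A› with
    norm_mul_le := by exact hq.mul_le }
  let _ : NormedAlgebra ℂ A := { ‹Algebra ℂ A› with
    norm_smul_le c y := by exact (hq.smul_eq c y).le }
  have : Nontrivial A := nontrivial_of_ne x 0 hx
  obtain ⟨φ, hφ⟩ :=
    CharacterSpace.exists_completion_norm_apply_eq (B := A) (x := x) (hq.map_pow_two_pow x)
  refine ⟨_, CharacterSpace.comp_coe_mem_mSpec φ, fun h => hx ?_⟩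
  rwa [h, norm_zero, eq_comm, norm_eq_zero] at hφ

/-- For a regular uniform normed Q-algebra `(A, N)` with unit and any uniform
norm `q` on `A`, the `q`-continuous nonzero multiplicative linear functionals
coincide with the `N`-continuous ones: `M(A,q) = M(A,N)`. -/
theorem mSpec_eq_of_regular {A : Type*} [CommRing A] [Algebra ℂ A]
    (N : A → ℝ) (hN : IsUniformNorm N)
    (hQ : NormOpen N {x | IsQuasiInv x})
    (hreg : RegularWrt N)
    (q : A → ℝ) (hq : IsUniformNorm q) :
    MSpec q = MSpec N := by
  have hsub : MSpec q ⊆ MSpec N := mSpec_subset_of_normOpen_isQuasiInv hN hQ q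
  refine hsub.antisymm fun f hf => by_contra fun hfq => ?_
  obtain ⟨x, hvanish, hfx⟩ := hreg (MSpec q) hsub (isClosed_setOf_mem_mSpec hq N) f hf hfq
  have hx : x ≠ 0 := by
    rintro rfl
    exact hfx (AddMonoidHom.mk' f hf.1).map_zero
  obtain ⟨g, hg, hgx⟩ := hq.exists_mem_mSpec_apply_ne_zero hx
  exact hgx (hvanish g hg)
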